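/- arXiv:2107.08428 — 2 statements merged into one kernel-verified Lean document; each statement's English description precedes it below -/
import Mathlib

section
/- Let V be a locally finite tree and k ∈ ℕ. If V is k-stable, then the set {x ∈ V : f(x) = k} is the same for all mex labellings f of V, and is equal to the set of positions x of finite rank with 𝒢(x) = k. -/
open scoped Classical

universe u

/-- `PosP Γ n` is the set `Pₙ` of positions from which the second player can win
within `n` rounds: `P₀` is the set of terminal positions, and
`Pₙ₊₁ = {x : every option of x has an option in Pₙ}`. -/
def PosP {V : Type*} (Γ : V → Finset V) : ℕ → Set V
  | 0 => {x | Γ x = ∅}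
  | n + 1 => {x | ∀ y ∈ Γ x, ∃ z ∈ Γ y, z ∈ PosP Γ n}

/-- `PosN Γ n` is the set `Nₙ`: for `n ≥ 1`, `Nₙ = {x : some option of x lies in Pₙ₋₁}`. -/
def PosN {V : Type*} (Γ : V → Finset V) : ℕ → Set V
  | 0 => ∅
  | n + 1 => {x | ∃ y ∈ Γ x, y ∈ PosP Γ n}

/-- The P-positions `𝒫 = ⋃ₙ Pₙ` (second player wins). -/
def PPos {V : Type*} (Γ : V → Finset V) : Set V := ⋃ n, PosP Γ n

/-- The N-positions `𝒩 = ⋃ₙ Nₙ` (first player wins). -/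
def NPos {V : Type*} (Γ : V → Finset V) : Set V := ⋃ n, PosN Γ n

/-- The D-positions `𝒟 = V ∖ (𝒫 ∪ 𝒩)` (draws). -/
def DPos {V : Type*} (Γ : V → Finset V) : Set V := (PPos Γ ∪ NPos Γ)ᶜ

/-- The mex (least natural number not attained) of the values `g y`, `y ∈ s`. -/
noncomputable def mexF {V : Type*} (s : Finset V) (g : V → ℕ∞) : ℕ :=
  sInf {n : ℕ | ∀ y ∈ s, g y ≠ (n : ℕ∞)}

/-- The approximants `𝒢ₙ` of the extended Sprague-Grundy function. -/
noncomputable def Gfun {V : Type*} (Γ : V → Finset V) : ℕ → V → ℕ∞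
  | 0 => fun x => if Γ x = ∅ then 0 else ⊤
  | n + 1 => fun x =>
      let m := mexF (Γ x) (Gfun Γ n)
      if ∀ y ∈ Γ x, Gfun Γ n y ≤ (m : ℕ∞) ∨ ∃ z ∈ Γ y, Gfun Γ n z = (m : ℕ∞)
      then (m : ℕ∞) else ⊤

/-- `x` has finite rank with (finite) Sprague-Grundy value `m`:
`𝒢ₙ(x) = m` for all sufficiently large `n`. -/
def HasGVal {V : Type*} (Γ : V → Finset V) (x : V) (m : ℕ) : Prop :=
  ∃ n₀ : ℕ, ∀ n ≥ n₀, Gfun Γ n x = (m : ℕ∞)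

/-- `x` has infinite rank: `𝒢ₙ(x) = ∞` for all `n`. -/
def InfiniteRank {V : Type*} (Γ : V → Finset V) (x : V) : Prop :=
  ∀ n : ℕ, Gfun Γ n x = ⊤

/-- The rank of `x`: the least `n` with `𝒢ₙ(x) < ∞`, or `∞` if there is none. -/
noncomputable def rank {V : Type*} (Γ : V → Finset V) (x : V) : ℕ∞ :=
  sInf ((↑) '' {n : ℕ | Gfun Γ n x ≠ ⊤})

/-- For `x` of infinite rank, the set `𝒜` with `𝒢(x) = ∞(𝒜)`:
the set of finite Sprague-Grundy values of finite-rank options of `x`. -/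
def ValSet {V : Type*} (Γ : V → Finset V) (x : V) : Set ℕ :=
  {a | ∃ y ∈ Γ x, HasGVal Γ y a}

/-- The graph of the disjunctive sum: move in exactly one coordinate. -/
noncomputable def sumGraph {V W : Type*} (Γ : V → Finset V) (Δ : W → Finset W) :
    V × W → Finset (V × W) := fun p =>
  (Γ p.1).image (fun u => (u, p.2)) ∪ (Δ p.2).image (fun w => (p.1, w))

/-- Two (positions of possibly different) games lie in the same outcome class. -/
def SameOutcome {V W : Type*} (Γ : V → Finset V) (x : V) (Δ : W → Finset W) (y : W) : Prop :=
  (x ∈ PPos Γ ↔ y ∈ PPos Δ) ∧ (x ∈ NPos Γ ↔ y ∈ NPos Δ) ∧ (x ∈ DPos Γ ↔ y ∈ DPos Δ)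

/-- Equivalence of games: `G + X` and `H + X` have the same outcome for every
locally finite game `X`. -/
def GameEquiv {V W : Type*} (Γ : V → Finset V) (x : V) (Δ : W → Finset W) (y : W) : Prop :=
  ∀ (X : Type u) (Ξ : X → Finset X) (z : X),
    SameOutcome (sumGraph Γ Ξ) (x, z) (sumGraph Δ Ξ) (y, z)

/-- The nim heap `*m`: positions `0, …, m`, where from `k` one can move to any `j < k`. -/
def nimGraph (m : ℕ) : Fin (m + 1) → Finset (Fin (m + 1)) :=
  fun k => Finset.univ.filter (fun j => j < k)

/-- The reduced graph `R(V)`: the induced graph on the complement of the P-positions. -/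
noncomputable def reducedGraph {V : Type*} (Γ : V → Finset V) :
    {x : V // x ∉ PPos Γ} → Finset {x : V // x ∉ PPos Γ} := fun x =>
  (Γ x.1).subtype (fun y => y ∉ PPos Γ)

/-- The vertex set of `R^{(k)}(V)`: positions which do not have finite rank with
Sprague-Grundy value `< k`. -/
def RkSet {V : Type*} (Γ : V → Finset V) (k : ℕ) : Set V :=
  {x | ¬ ∃ m < k, HasGVal Γ x m}

/-- The induced game graph `R^{(k)}(V)` on `RkSet Γ k`. -/
noncomputable def RkGraph {V : Type*} (Γ : V → Finset V) (k : ℕ) :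
    RkSet Γ k → Finset (RkSet Γ k) := fun x =>
  (Γ x.1).subtype (fun y => y ∈ RkSet Γ k)

/-- `V` is `k`-stable: every infinite-rank position `x`, with `𝒢(x) = ∞(𝒜)`,
has `{0, 1, …, k} ⊆ 𝒜`. -/
def kStable {V : Type*} (Γ : V → Finset V) (k : ℕ) : Prop :=
  ∀ x, InfiniteRank Γ x → ∀ j ≤ k, j ∈ ValSet Γ x

/-- `l` is a directed walk from `o` to `x` in the graph `Γ`. -/
def IsWalk {V : Type*} (Γ : V → Finset V) (o x : V) (l : List V) : Prop :=
  l.head? = some o ∧ l.getLast? = some x ∧ l.Chain' (fun a b => b ∈ Γ a)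

/-- `Γ` is a tree with root `o`: `o` has no incoming arcs, and every vertex is
reached from `o` by a unique directed walk. -/
def IsTree {V : Type*} (Γ : V → Finset V) (o : V) : Prop :=
  (∀ x, o ∉ Γ x) ∧ ∀ x, ∃! l : List V, IsWalk Γ o x l

/-- `f` is a mex labelling: `f x` is the least natural number not attained by `f`
on the options of `x`, for every `x`. -/
def MexLabelling {V : Type*} (Γ : V → Finset V) (f : V → ℕ) : Prop :=
  ∀ x, f x = sInf {n : ℕ | ∀ y ∈ Γ x, f y ≠ n}

/-!
By strong induction on `m ≤ k`, a position has Sprague-Grundy value `m` iff it is labelled `m`.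
If `𝒢ₙ(x) = m`, induction on `n` gives `f x = m`: the options of `x` realise every value below
`m` with the same labels, and every other option has an option labelled `m`, so is not labelled
`m` itself. Conversely, if `f x = m`, the options of `x` realise every value below `m` and none
has value `m`; an option of finite value above `m` has an option of value `m`, and `k`-stability
provides one for an option of infinite rank. These are exactly the conditions for `𝒢(x) = m`.
-/

open Filter

lemma ENat.lt_coe_iff_exists {a : ℕ∞} {m : ℕ} : a < m ↔ ∃ i < m, a = i := by
  cases a <;> simp

lemma mexF_eq_iff {V : Type*} {s : Finset V} {g : V → ℕ∞} {m : ℕ} :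
    mexF s g = m ↔ (∀ i < m, ∃ y ∈ s, g y = i) ∧ ∀ y ∈ s, g y ≠ m := by
  have hfin : {n : ℕ | ∃ y ∈ s, g y = n}.Finite :=
    ((s.finite_toSet.image g).preimage Nat.cast_injective.injOn).subset
      (by rintro n ⟨y, hy, hyn⟩; exact ⟨y, hy, hyn⟩)
  obtain ⟨n, hn⟩ := hfin.exists_notMem
  have hne : {n : ℕ | ∀ y ∈ s, g y ≠ n}.Nonempty := ⟨n, fun y hy hyn => hn ⟨y, hy, hyn⟩⟩
  rw [mexF, csInf_eq_iff hne, and_comm]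
  refine and_congr ⟨fun h i hi => ?_, fun h a ha => ?_⟩ Iff.rfl
  · by_contra! hi'
    exact (h i hi').not_gt hi
  · by_contra! ha'
    obtain ⟨y, hy, hya⟩ := h a ha'
    exact ha y hy hya

section

variable {V : Type*} {Γ : V → Finset V} {x : V} {m : ℕ}

/-- The recursion for `𝒢ₙ₊₁(x) = m`, with `P y i` read as "`y` has value `i`"; the condition
`𝒢ₙ(y) ≤ m` of the definition becomes `< m` thanks to the second clause. -/
def GrundyRule (Γ : V → Finset V) (P : V → ℕ → Prop) (x : V) (m : ℕ) : Prop :=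
  (∀ i < m, ∃ y ∈ Γ x, P y i) ∧ (∀ y ∈ Γ x, ¬ P y m) ∧
    ∀ y ∈ Γ x, (∃ i < m, P y i) ∨ ∃ z ∈ Γ y, P z m

lemma GrundyRule.of_imp {P Q : V → ℕ → Prop} (h : GrundyRule Γ P x m)
    (hPQ : ∀ y i, P y i → Q y i) (hQ : ∀ y ∈ Γ x, ¬ Q y m) : GrundyRule Γ Q x m :=
  ⟨fun i hi => (h.1 i hi).imp fun y => And.imp_right (hPQ y i), hQ, fun y hy =>
    (h.2.2 y hy).imp (Exists.imp fun i => And.imp_right (hPQ y i))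
      (Exists.imp fun z => And.imp_right (hPQ z m))⟩

lemma Gfun_zero_eq_coe_iff : Gfun Γ 0 x = m ↔ Γ x = ∅ ∧ m = 0 := by
  simp only [Gfun]
  split_ifs with hx <;> simp [hx, eq_comm]

lemma Gfun_succ_eq_coe_iff {n : ℕ} :
    Gfun Γ (n + 1) x = m ↔ GrundyRule Γ (fun y i => Gfun Γ n y = i) x m := by
  simp only [Gfun]
  by_cases hmex : mexF (Γ x) (Gfun Γ n) = m
  · obtain ⟨hlt, hne⟩ := mexF_eq_iff.1 hmex
    have hle : ∀ y ∈ Γ x, Gfun Γ n y ≤ m ↔ ∃ i < m, Gfun Γ n y = i := fun y hy => by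
      rw [(hne y hy).le_iff_lt, ENat.lt_coe_iff_exists]
    simp only [hmex]
    split_ifs with h
    · simp only [true_iff]
      exact ⟨hlt, hne, fun y hy => (h y hy).imp_left (hle y hy).1⟩
    · simp only [ENat.top_ne_natCast, false_iff]
      exact fun hr => h fun y hy => (hr.2.2 y hy).imp_left (hle y hy).2
  · have : ¬ GrundyRule Γ (fun y i => Gfun Γ n y = i) x m :=
      fun h => hmex (mexF_eq_iff.2 ⟨h.1, h.2.1⟩)
    split_ifs <;> simp [hmex, this]

lemma hasGVal_iff_eventually : HasGVal Γ x m ↔ ∀ᶠ n in atTop, Gfun Γ n x = m :=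
  eventually_atTop.symm

lemma Gfun_succ_of_eq_coe {n : ℕ} (h : Gfun Γ n x = m) : Gfun Γ (n + 1) x = m := by
  induction n generalizing x m with
  | zero =>
    obtain ⟨hx, rfl⟩ := Gfun_zero_eq_coe_iff.1 h
    exact Gfun_succ_eq_coe_iff.2 (by simp [GrundyRule, hx])
  | succ n ih =>
    rw [Gfun_succ_eq_coe_iff] at h ⊢
    refine h.of_imp (fun y i => ih) fun y hy hym => ?_
    rcases h.2.2 y hy with ⟨i, hi, hyi⟩ | ⟨z, hz, hzm⟩
    · exact hi.ne (by exact_mod_cast (ih hyi).symm.trans hym)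
    · exact (Gfun_succ_eq_coe_iff.1 hym).2.1 z hz hzm

lemma hasGVal_of_Gfun_eq {n : ℕ} (h : Gfun Γ n x = m) : HasGVal Γ x m :=
  ⟨n, fun p hp => Nat.le_induction h (fun _ _ => Gfun_succ_of_eq_coe) p hp⟩

lemma hasGVal_iff_grundyRule : HasGVal Γ x m ↔ GrundyRule Γ (HasGVal Γ) x m := by
  constructor
  · intro hx
    have hrule : ∀ᶠ n in atTop, GrundyRule Γ (fun y i => Gfun Γ n y = i) x m :=
      ((tendsto_add_atTop_nat 1).eventually (hasGVal_iff_eventually.1 hx)).mono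
        fun n => Gfun_succ_eq_coe_iff.1
    obtain ⟨n, hn⟩ := hrule.exists
    refine hn.of_imp (fun y i => hasGVal_of_Gfun_eq) fun y hy hym => ?_
    obtain ⟨N, hxN, hyN⟩ := (hrule.and (hasGVal_iff_eventually.1 hym)).exists
    exact hxN.2.1 y hy hyN
  · rintro ⟨hlt, hne, hopt⟩
    have hbelow : ∀ᶠ n in atTop, ∀ i < m, ∃ y ∈ Γ x, Gfun Γ n y = i :=
      (eventually_all_finite (Set.finite_lt_nat m)).2 fun i hi =>
        let ⟨y, hy, hyi⟩ := hlt i hi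
        (hasGVal_iff_eventually.1 hyi).mono fun _ hn => ⟨y, hy, hn⟩
    have hreply : ∀ᶠ n in atTop,
        ∀ y ∈ Γ x, (∃ i < m, Gfun Γ n y = i) ∨ ∃ z ∈ Γ y, Gfun Γ n z = m :=
      (eventually_all_finset (Γ x)).2 fun y hy => by
        rcases hopt y hy with ⟨i, hi, hyi⟩ | ⟨z, hz, hzm⟩
        · exact (hasGVal_iff_eventually.1 hyi).mono fun _ hn => Or.inl ⟨i, hi, hn⟩
        · exact (hasGVal_iff_eventually.1 hzm).mono fun _ hn => Or.inr ⟨z, hz, hn⟩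
    obtain ⟨n, hnbelow, hnreply⟩ := (hbelow.and hreply).exists
    exact hasGVal_of_Gfun_eq <| Gfun_succ_eq_coe_iff.2
      ⟨hnbelow, fun y hy hyn => hne y hy (hasGVal_of_Gfun_eq hyn), hnreply⟩

lemma exists_hasGVal_of_not_infiniteRank (h : ¬ InfiniteRank Γ x) : ∃ m, HasGVal Γ x m := by
  obtain ⟨n, hn⟩ := not_forall.1 h
  obtain ⟨m, hm⟩ := WithTop.ne_top_iff_exists.1 hn
  exact ⟨m, hasGVal_of_Gfun_eq hm.symm⟩

namespace MexLabelling

variable {f : V → ℕ}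

lemma eq_iff (hf : MexLabelling Γ f) :
    f x = m ↔ (∀ i < m, ∃ y ∈ Γ x, f y = i) ∧ ∀ y ∈ Γ x, f y ≠ m := by
  have : f x = mexF (Γ x) (fun y => (f y : ℕ∞)) := by simp [hf x, mexF]
  rw [this, mexF_eq_iff]
  simp only [ne_eq, Nat.cast_inj]

lemma eq_of_grundyRule (hf : MexLabelling Γ f) {P : V → ℕ → Prop} (h : GrundyRule Γ P x m)
    (hlow : ∀ y, ∀ i < m, P y i → f y = i) (hopt : ∀ y ∈ Γ x, ∀ z ∈ Γ y, P z m → f z = m) :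
    f x = m := by
  refine hf.eq_iff.2 ⟨fun i hi => ?_, fun y hy hym => ?_⟩
  · obtain ⟨y, hy, hyi⟩ := h.1 i hi
    exact ⟨y, hy, hlow y i hi hyi⟩
  · rcases h.2.2 y hy with ⟨i, hi, hyi⟩ | ⟨z, hz, hzm⟩
    · exact hi.ne ((hlow y i hi hyi).symm.trans hym)
    · exact (hf.eq_iff.1 hym).2 z hz (hopt y hy z hz hzm)

lemma eq_of_Gfun_eq (hf : MexLabelling Γ f) {n : ℕ} (h : Gfun Γ n x = m) : f x = m := by
  induction m using Nat.strong_induction_on generalizing n x with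
  | _ m ihm =>
  induction n generalizing x with
  | zero =>
    obtain ⟨hx, rfl⟩ := Gfun_zero_eq_coe_iff.1 h
    exact hf.eq_iff.2 ⟨fun i hi => absurd hi i.not_lt_zero, by simp [hx]⟩
  | succ n ihn =>
    exact hf.eq_of_grundyRule (Gfun_succ_eq_coe_iff.1 h) (fun _ i hi => ihm i hi)
      fun y _ z _ => ihn

lemma eq_of_hasGVal (hf : MexLabelling Γ f) (h : HasGVal Γ x m) : f x = m :=
  let ⟨n, hn⟩ := h
  hf.eq_of_Gfun_eq (hn n le_rfl)

lemma hasGVal_of_eq (hf : MexLabelling Γ f) {k : ℕ} (hs : kStable Γ k) (hm : m ≤ k)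
    (hx : f x = m) : HasGVal Γ x m := by
  induction m using Nat.strong_induction_on generalizing x with
  | _ m ih =>
  obtain ⟨hlt, hne⟩ := hf.eq_iff.1 hx
  have hne' : ∀ y ∈ Γ x, ¬ HasGVal Γ y m := fun y hy hym => hne y hy (hf.eq_of_hasGVal hym)
  refine hasGVal_iff_grundyRule.2 ⟨fun i hi => ?_, hne', fun y hy => ?_⟩
  · obtain ⟨y, hy, hyi⟩ := hlt i hi
    exact ⟨y, hy, ih i hi (hi.le.trans hm) hyi⟩
  · by_cases hy' : InfiniteRank Γ y
    · exact Or.inr (hs y hy' m hm)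
    obtain ⟨j, hj⟩ := exists_hasGVal_of_not_infiniteRank hy'
    rcases lt_trichotomy j m with hjm | rfl | hmj
    · exact Or.inl ⟨j, hjm, hj⟩
    · exact absurd hj (hne' y hy)
    · exact Or.inr ((hasGVal_iff_grundyRule.1 hj).1 m hmj)

end MexLabelling

end

theorem stmt14_general {V : Type*} (Γ : V → Finset V) (k : ℕ)
    (hs : kStable Γ k) (f : V → ℕ) (hf : MexLabelling Γ f) :
    {x : V | f x = k} = {x : V | HasGVal Γ x k} :=
  Set.ext fun _ => ⟨hf.hasGVal_of_eq hs le_rfl, hf.eq_of_hasGVal⟩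

/-- if the locally finite tree `V` is `k`-stable, then for every
mex labelling `f` the set `{x : f x = k}` equals the set of finite-rank
positions with `𝒢(x) = k` (hence is the same for all mex labellings). -/
theorem stmt14 {V : Type*} (Γ : V → Finset V) (o : V) (ht : IsTree Γ o) (k : ℕ)
    (hs : kStable Γ k) (f : V → ℕ) (hf : MexLabelling Γ f) :
    {x : V | f x = k} = {x : V | HasGVal Γ x k} :=
  stmt14_general Γ k hs f hf
end

section
/- Let V be a locally finite game graph in which every position has at most d options, where d ≥ 1. If x ∈ V has infinite rank, with extended Sprague-Grundy value 𝒢(x) = ∞(𝒜), then 𝒜 ⊆ {0, 1, …, d} and |𝒜| ≤ d − 1. (Indeed, x must have, for each a ∈ 𝒜, at least one option of finite rank with value a, and additionally at least one option of infinite rank.) -/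
open scoped Classical

universe u

/-!
Once an approximant `𝒢ₙ(x)` is finite it never changes again. If every option of `x` had
finite rank, there would be a common level `N` at which all option values are finite. Each
option `y` with `𝒢_N(y)` above `m = mex {𝒢_N(y)}` then has an option `z` with `𝒢_N(z) = m`,
because `𝒢_N(y)` is itself a mex of values that are already stable, so `𝒢_{N+1}(x) = m` and
`x` has finite rank. Hence a position of infinite rank has an option of infinite rank. The
values in `𝒜` are carried by the at most `d - 1` other options, and each of them is at most
the number of options of the position carrying it.
-/

section Mex

variable {V : Type*} (s : Finset V) (g : V → ℕ∞)

theorem exists_le_card_forall_ne : ∃ n ≤ s.card, ∀ y ∈ s, g y ≠ (n : ℕ∞) := by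
  by_contra! h
  have hsub : (Finset.range (s.card + 1)).image ((↑) : ℕ → ℕ∞) ⊆ s.image g := by
    intro v hv
    obtain ⟨n, hn, rfl⟩ := Finset.mem_image.mp hv
    obtain ⟨y, hy, hgy⟩ := h n (Finset.mem_range_succ_iff.mp hn)
    exact Finset.mem_image.mpr ⟨y, hy, hgy⟩
  have := (Finset.card_le_card hsub).trans Finset.card_image_le
  rw [Finset.card_image_of_injective _ Nat.cast_injective, Finset.card_range] at this
  omega

theorem mexF_ne : ∀ y ∈ s, g y ≠ (mexF s g : ℕ∞) := by
  obtain ⟨n, -, hn⟩ := exists_le_card_forall_ne s g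
  exact Nat.sInf_mem (s := {n : ℕ | ∀ y ∈ s, g y ≠ (n : ℕ∞)}) ⟨n, hn⟩

theorem mexF_le_card : mexF s g ≤ s.card := by
  obtain ⟨n, hle, hn⟩ := exists_le_card_forall_ne s g
  exact (Nat.sInf_le (s := {n : ℕ | ∀ y ∈ s, g y ≠ (n : ℕ∞)}) hn).trans hle

variable {s g}

theorem exists_eq_of_lt_mexF {j : ℕ} (hj : j < mexF s g) : ∃ y ∈ s, g y = (j : ℕ∞) := by
  simpa only [Set.mem_ofPred_eq, not_forall, not_not, exists_prop] using Nat.notMem_of_lt_sInf hj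

theorem mexF_eq_of {m : ℕ} (hne : ∀ y ∈ s, g y ≠ (m : ℕ∞))
    (hlt : ∀ j < m, ∃ y ∈ s, g y = (j : ℕ∞)) : mexF s g = m := by
  refine le_antisymm (Nat.sInf_le hne) (not_lt.mp fun h => ?_)
  obtain ⟨y, hy, hgy⟩ := hlt _ h
  exact mexF_ne s g y hy hgy

end Mex

/-- The side condition in the definition of `𝒢ₙ₊₁(x)` from `g = 𝒢ₙ`: every option whose value
exceeds `m = mex` has an option of value `m`. -/
def MexAdmissible {V : Type*} (Γ : V → Finset V) (g : V → ℕ∞) (x : V) : Prop :=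
  ∀ y ∈ Γ x, g y ≤ (mexF (Γ x) g : ℕ∞) ∨ ∃ z ∈ Γ y, g z = (mexF (Γ x) g : ℕ∞)

namespace Gfun

variable {V : Type*} {Γ : V → Finset V} {n : ℕ} {x : V}

theorem zero_apply : Gfun Γ 0 x = if Γ x = ∅ then 0 else ⊤ := rfl

theorem succ_apply :
    Gfun Γ (n + 1) x =
      if MexAdmissible Γ (Gfun Γ n) x then (mexF (Γ x) (Gfun Γ n) : ℕ∞) else ⊤ :=
  if_congr Iff.rfl rfl rfl

theorem zero_eq_zero_of_ne_top (h : Gfun Γ 0 x ≠ ⊤) : Gfun Γ 0 x = 0 := by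
  rw [zero_apply] at h ⊢
  split_ifs at h ⊢
  · rfl
  · exact absurd rfl h

theorem succ_eq_mexF (h : MexAdmissible Γ (Gfun Γ n) x) :
    Gfun Γ (n + 1) x = mexF (Γ x) (Gfun Γ n) := by
  rw [succ_apply, if_pos h]

theorem mexAdmissible_of_succ_ne_top (h : Gfun Γ (n + 1) x ≠ ⊤) :
    MexAdmissible Γ (Gfun Γ n) x := by
  by_contra hc
  rw [succ_apply, if_neg hc] at h
  exact h rfl

theorem succ_eq_mexF_of_ne_top (h : Gfun Γ (n + 1) x ≠ ⊤) :
    Gfun Γ (n + 1) x = mexF (Γ x) (Gfun Γ n) :=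
  succ_eq_mexF (mexAdmissible_of_succ_ne_top h)

theorem succ_eq_of_ne_top (h : Gfun Γ n x ≠ ⊤) : Gfun Γ (n + 1) x = Gfun Γ n x := by
  induction n generalizing x with
  | zero =>
    have hempty : Γ x = ∅ := by
      by_contra he
      rw [zero_apply, if_neg he] at h
      exact h rfl
    have hadm : MexAdmissible Γ (Gfun Γ 0) x := by
      simp only [MexAdmissible, hempty, Finset.notMem_empty, false_imp_iff, imp_true_iff]
    have hmex : mexF (Γ x) (Gfun Γ 0) = 0 := by
      simpa [hempty] using mexF_le_card (Γ x) (Gfun Γ 0)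
    rw [succ_eq_mexF hadm, hmex, zero_eq_zero_of_ne_top h, Nat.cast_zero]
  | succ n ih =>
    have hadm := mexAdmissible_of_succ_ne_top h
    set m := mexF (Γ x) (Gfun Γ n)
    have ih' : ∀ {y} {k : ℕ}, Gfun Γ n y = k → Gfun Γ (n + 1) y = k := fun hk =>
      (ih (by simp [hk])).trans hk
    have hmex : mexF (Γ x) (Gfun Γ (n + 1)) = m := by
      refine mexF_eq_of (fun y hy hym => ?_) (fun j hj => ?_)
      · rcases hadm y hy with hle | ⟨z, hz, hzm⟩
        · have hfin : Gfun Γ n y ≠ ⊤ := ne_top_of_le_ne_top (by simp) hle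
          exact mexF_ne (Γ x) (Gfun Γ n) y hy ((ih hfin).symm.trans hym)
        · have hmy : mexF (Γ y) (Gfun Γ n) = m := by
            exact_mod_cast (succ_eq_mexF_of_ne_top (by simp [hym])).symm.trans hym
          exact mexF_ne (Γ y) (Gfun Γ n) z hz (hzm.trans (by rw [hmy]))
      · obtain ⟨y, hy, hyj⟩ := exists_eq_of_lt_mexF hj
        exact ⟨y, hy, ih' hyj⟩
    have hadm' : MexAdmissible Γ (Gfun Γ (n + 1)) x := by
      intro y hy
      rw [hmex]
      rcases hadm y hy with hle | ⟨z, hz, hzm⟩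
      · have hfin : Gfun Γ n y ≠ ⊤ := ne_top_of_le_ne_top (by simp) hle
        exact Or.inl ((ih hfin).trans_le hle)
      · exact Or.inr ⟨z, hz, ih' hzm⟩
    rw [succ_eq_mexF hadm', hmex, succ_eq_mexF hadm]

theorem eq_of_le_of_ne_top {m : ℕ} (h : Gfun Γ m x ≠ ⊤) (hmn : m ≤ n) :
    Gfun Γ n x = Gfun Γ m x := by
  induction n, hmn using Nat.le_induction with
  | base => rfl
  | succ n _ ih => rw [succ_eq_of_ne_top (ih ▸ h), ih]

theorem exists_option_eq_of_lt (h : Gfun Γ n x ≠ ⊤) {j : ℕ} (hj : (j : ℕ∞) < Gfun Γ n x) :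
    ∃ z ∈ Γ x, Gfun Γ n z = j := by
  cases n with
  | zero => simp [zero_eq_zero_of_ne_top h] at hj
  | succ n =>
    rw [succ_eq_mexF_of_ne_top h, Nat.cast_lt] at hj
    obtain ⟨z, hz, hzj⟩ := exists_eq_of_lt_mexF hj
    exact ⟨z, hz, (succ_eq_of_ne_top (by simp [hzj])).trans hzj⟩

end Gfun

section Rank

variable {V : Type*} {Γ : V → Finset V} {x y : V} {a b : ℕ}

theorem HasGVal.unique (ha : HasGVal Γ x a) (hb : HasGVal Γ x b) : a = b := by
  obtain ⟨n, hn⟩ := ha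
  obtain ⟨m, hm⟩ := hb
  exact_mod_cast (hn _ (le_max_left n m)).symm.trans (hm _ (le_max_right n m))

theorem HasGVal.le_card (ha : HasGVal Γ x a) : a ≤ (Γ x).card := by
  obtain ⟨n, hn⟩ := ha
  have hval := hn (n + 1) n.le_succ
  rw [Gfun.succ_eq_mexF_of_ne_top (by simp [hval]), Nat.cast_inj] at hval
  exact hval ▸ mexF_le_card _ _

theorem HasGVal.not_infiniteRank (ha : HasGVal Γ x a) : ¬InfiniteRank Γ x := by
  obtain ⟨n, hn⟩ := ha
  intro hinf
  simpa [hinf n] using hn n le_rfl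

theorem exists_level_forall_ne_top (s : Finset V) (hs : ∀ y ∈ s, ¬InfiniteRank Γ y) :
    ∃ N, ∀ y ∈ s, Gfun Γ N y ≠ ⊤ := by
  simp only [InfiniteRank, not_forall] at hs
  choose! level hlevel using hs
  exact ⟨s.sup level, fun y hy =>
    (Gfun.eq_of_le_of_ne_top (hlevel y hy) (Finset.le_sup hy)).symm ▸ hlevel y hy⟩

theorem mexAdmissible_of_forall_ne_top {N : ℕ} (h : ∀ y ∈ Γ x, Gfun Γ N y ≠ ⊤) :
    MexAdmissible Γ (Gfun Γ N) x := by
  intro y hy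
  rcases le_or_gt (Gfun Γ N y) (mexF (Γ x) (Gfun Γ N)) with hle | hgt
  · exact Or.inl hle
  · exact Or.inr (Gfun.exists_option_eq_of_lt (h y hy) hgt)

theorem InfiniteRank.exists_option (hx : InfiniteRank Γ x) : ∃ y ∈ Γ x, InfiniteRank Γ y := by
  by_contra! h
  obtain ⟨N, hN⟩ := exists_level_forall_ne_top (Γ x) h
  simpa [hx (N + 1)] using Gfun.succ_eq_mexF (mexAdmissible_of_forall_ne_top hN)

/-- Junk value `0` at positions of infinite rank. -/
noncomputable def grundyValue (Γ : V → Finset V) (x : V) : ℕ :=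
  if h : ∃ a, HasGVal Γ x a then h.choose else 0

theorem HasGVal.grundyValue_eq (ha : HasGVal Γ x a) : grundyValue Γ x = a := by
  have h : ∃ a, HasGVal Γ x a := ⟨a, ha⟩
  rw [grundyValue, dif_pos h]
  exact h.choose_spec.unique ha

theorem valSet_subset_image_grundyValue (hy : InfiniteRank Γ y) :
    ValSet Γ x ⊆ ((Γ x).erase y).image (grundyValue Γ) := by
  rintro a ⟨z, hz, hza⟩
  have hzy : z ≠ y := fun h => hza.not_infiniteRank (h ▸ hy)
  exact Finset.mem_image.mpr ⟨z, Finset.mem_erase.mpr ⟨hzy, hz⟩, hza.grundyValue_eq⟩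

theorem ncard_valSet_le (hyx : y ∈ Γ x) (hy : InfiniteRank Γ y) :
    (ValSet Γ x).ncard ≤ (Γ x).card - 1 :=
  calc (ValSet Γ x).ncard
      ≤ (((Γ x).erase y).image (grundyValue Γ) : Set ℕ).ncard :=
        Set.ncard_le_ncard (valSet_subset_image_grundyValue hy) (Finset.finite_toSet _)
    _ ≤ ((Γ x).erase y).card := by
        rw [Set.ncard_coe_finset]; exact Finset.card_image_le
    _ = (Γ x).card - 1 := Finset.card_erase_of_mem hyx

end Rank

theorem stmt18_general {V : Type*} (Γ : V → Finset V) (d : ℕ)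
    (hdeg : ∀ x : V, (Γ x).card ≤ d) (x : V) (A : Set ℕ)
    (hinf : InfiniteRank Γ x) (hA : ValSet Γ x = A) :
    A ⊆ {a : ℕ | a ≤ d} ∧ A.Finite ∧ A.ncard ≤ d - 1 ∧
      (∀ a ∈ A, ∃ y ∈ Γ x, HasGVal Γ y a) ∧ (∃ y ∈ Γ x, InfiniteRank Γ y) := by
  subst hA
  obtain ⟨y, hyx, hy⟩ := hinf.exists_option
  have hbound : ValSet Γ x ⊆ {a : ℕ | a ≤ d} := fun a ⟨z, _, hza⟩ => hza.le_card.trans (hdeg z)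
  exact ⟨hbound, (Set.finite_Iic d).subset hbound,
    (ncard_valSet_le hyx hy).trans (Nat.sub_le_sub_right (hdeg x) 1),
    fun _ ha => ha, ⟨y, hyx, hy⟩⟩

/-- if every position has at most `d ≥ 1` options and `x` has
infinite rank with `𝒢(x) = ∞(𝒜)`, then `𝒜 ⊆ {0, …, d}` and `|𝒜| ≤ d − 1`;
indeed `x` has, for each `a ∈ 𝒜`, an option of finite rank with value `a`, and
additionally an option of infinite rank. -/
theorem stmt18 {V : Type*} (Γ : V → Finset V) (d : ℕ) (hd : 1 ≤ d)
    (hdeg : ∀ x : V, (Γ x).card ≤ d) (x : V) (A : Set ℕ)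
    (hinf : InfiniteRank Γ x) (hA : ValSet Γ x = A) :
    A ⊆ {a : ℕ | a ≤ d} ∧ A.Finite ∧ A.ncard ≤ d - 1 ∧
      (∀ a ∈ A, ∃ y ∈ Γ x, HasGVal Γ y a) ∧ (∃ y ∈ Γ x, InfiniteRank Γ y) :=
  stmt18_general Γ d hdeg x A hinf hA
end
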